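/- arXiv:1412.2026 — 2 statements merged into one kernel-verified Lean document; each statement's English description precedes it below -/
import Mathlib

section
/- Let L be a random variable in ℝ^ν with P(L ∈ l_0 + ℤ^ν) = 1, where l_0 = (0,…,0,p/q) for coprime integers 0 ≤ p < q, and suppose that for v ∈ ℝ^ν, |E e^{2πi⟨v,L⟩}| = 1 if and only if v ∈ ℤ^ν. Then, with D = diag(1,…,1,q), the random variable DL takes values in ℤ^ν and is aperiodic. -/
open MeasureTheory ProbabilityTheory Filter Set Real

noncomputable section

/-! If `⟨t, DL⟩ ∈ ℤ` almost surely, the characteristic function of `L` equals `1` at `v = Dt`, so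
`v ∈ ℤ^ν`. Evaluating `⟨v, L⟩` at a sample point of `l₀ + ℤ^ν` then shows `v_ν · p / q ∈ ℤ`, and
coprimality of `p` and `q` gives `q ∣ v_ν = q t_ν`, i.e. `t_ν ∈ ℤ`. -/

section IntegerVectors

variable {ι : Type*}

lemma exists_mulSingle_mul_eq_intCast [DecidableEq ι] (i₀ : ι) {p q : ℕ} (hq : q ≠ 0)
    {x : ι → ℝ} {i : ι}
    (hx : ∃ k : ℤ, x i = (Pi.single i₀ ((p : ℝ) / q) : ι → ℝ) i + k) :
    ∃ k : ℤ, (Pi.mulSingle i₀ (q : ℝ) : ι → ℝ) i * x i = k := by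
  obtain ⟨k, hk⟩ := hx
  rcases eq_or_ne i i₀ with rfl | hi
  · refine ⟨p + q * k, ?_⟩
    rw [hk, Pi.mulSingle_eq_same, Pi.single_eq_same]
    push_cast
    field_simp
  · exact ⟨k, by simp [hk, hi]⟩

variable [Fintype ι]

lemma exists_dotProduct_eq_intCast {v w : ι → ℝ} (hv : ∀ i, ∃ k : ℤ, v i = k)
    (hw : ∀ i, ∃ k : ℤ, w i = k) : ∃ k : ℤ, v ⬝ᵥ w = k := by
  choose a ha using hv
  choose b hb using hw
  exact ⟨∑ i, a i * b i, by simp [dotProduct, ha, hb]⟩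

lemma exists_dotProduct_offset_eq_intCast {v c x : ι → ℝ} (hv : ∀ i, ∃ k : ℤ, v i = k)
    (hx : ∀ i, ∃ k : ℤ, x i = c i + k) (hvx : ∃ m : ℤ, v ⬝ᵥ x = m) :
    ∃ m : ℤ, v ⬝ᵥ c = m := by
  choose k hk using hx
  obtain ⟨a, ha⟩ := exists_dotProduct_eq_intCast hv fun i => ⟨k i, rfl⟩
  obtain ⟨m, hm⟩ := hvx
  refine ⟨m - a, ?_⟩
  rw [show x = c + fun i => (k i : ℝ) from funext hk, dotProduct_add, ha] at hm
  push_cast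
  linarith

end IntegerVectors

lemma Int.dvd_of_mul_div_eq_intCast {p q : ℕ} (hcop : p.Coprime q) (hq : q ≠ 0) {n m : ℤ}
    (h : (n : ℝ) * (p / q) = m) : (q : ℤ) ∣ n := by
  have hnp : n * p = m * q := by
    rw [mul_div_assoc', div_eq_iff (by exact_mod_cast hq)] at h
    exact_mod_cast h
  exact (Nat.isCoprime_iff_coprime.mpr hcop.symm).dvd_of_dvd_mul_right ⟨m, by rw [hnp, mul_comm]⟩

lemma integral_exp_two_pi_mul_I_eq_one {Ω : Type*} [MeasurableSpace Ω] {μ : Measure Ω}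
    [IsProbabilityMeasure μ] {f : Ω → ℝ} (hf : ∀ᵐ ω ∂μ, ∃ k : ℤ, f ω = k) :
    ∫ ω, Complex.exp (((2 * π * f ω : ℝ) : ℂ) * Complex.I) ∂μ = 1 := by
  have hexp : ∀ᵐ ω ∂μ, Complex.exp (((2 * π * f ω : ℝ) : ℂ) * Complex.I) = 1 := by
    filter_upwards [hf] with ω ⟨k, hk⟩
    rw [hk, ← Complex.exp_int_mul_two_pi_mul_I k]
    push_cast
    ring_nf
  rw [integral_congr_ae hexp, integral_const]
  simp

theorem exists_eq_intCast_of_ae_sum_mulSingle_mul_eq_intCast {ι : Type*} [Fintype ι]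
    [DecidableEq ι] (i₀ : ι) {Ω : Type*} [MeasurableSpace Ω] {μ : Measure Ω}
    [IsProbabilityMeasure μ]
    {L : Ω → EuclideanSpace ℝ ι} {p q : ℕ} (hq : q ≠ 0) (hcop : p.Coprime q)
    (hlat : ∀ᵐ ω ∂μ, ∀ i, ∃ k : ℤ, L ω i = (Pi.single i₀ ((p : ℝ) / q) : ι → ℝ) i + k)
    (hchar : ∀ v : EuclideanSpace ℝ ι,
      ‖∫ ω, Complex.exp (((2 * π * inner ℝ v (L ω) : ℝ) : ℂ) * Complex.I) ∂μ‖ = 1 →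
        ∀ i, ∃ k : ℤ, v i = k)
    {t : ι → ℝ}
    (ht : ∀ᵐ ω ∂μ, ∃ k : ℤ,
      ∑ i, t i * ((Pi.mulSingle i₀ (q : ℝ) : ι → ℝ) i * L ω i) = k) :
    ∀ i, ∃ k : ℤ, t i = k := by
  set v : EuclideanSpace ℝ ι := WithLp.toLp 2 (Pi.mulSingle i₀ (q : ℝ) * t)
  have hdot : ∀ ω, (v : ι → ℝ) ⬝ᵥ L ω
      = ∑ i, t i * ((Pi.mulSingle i₀ (q : ℝ) : ι → ℝ) i * L ω i) :=
    fun ω => Finset.sum_congr rfl fun i _ => by simp only [v, Pi.mul_apply]; ring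
  have hv : ∀ i, ∃ k : ℤ, v i = k := hchar v (by
    simp_rw [EuclideanSpace.inner_eq_star_dotProduct, star_trivial,
      dotProduct_comm _ (v : ι → ℝ), hdot]
    rw [integral_exp_two_pi_mul_I_eq_one ht, norm_one])
  obtain ⟨ω, hω, hωt⟩ := (hlat.and ht).exists
  obtain ⟨m, hm⟩ := exists_dotProduct_offset_eq_intCast hv hω (by rwa [hdot])
  intro i
  obtain ⟨n, hn⟩ := hv i
  rcases eq_or_ne i i₀ with rfl | hi
  · rw [dotProduct_single, hn] at hm
    obtain ⟨r, rfl⟩ := Int.dvd_of_mul_div_eq_intCast hcop hq hm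
    refine ⟨r, mul_left_cancel₀ (Nat.cast_ne_zero.mpr hq) ?_⟩
    simp only [v, Pi.mul_apply, Pi.mulSingle_eq_same] at hn
    rw [hn]
    push_cast
    ring
  · exact ⟨n, by simpa [v, hi] using hn⟩

theorem DL_aperiodic_general {ν : ℕ} {Ω : Type} [MeasureSpace Ω]
    [IsProbabilityMeasure (ℙ : Measure Ω)]
    (L : Ω → EuclideanSpace ℝ (Fin ν))
    (p q : ℕ) (hpq : p < q) (hcop : Nat.Coprime p q)
    (hlat : ∀ᵐ ω ∂ℙ, ∀ i : Fin ν,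
      ∃ k : ℤ, L ω i = (if (i : ℕ) = ν - 1 then (p : ℝ) / (q : ℝ) else 0) + (k : ℝ))
    (hchar : ∀ v : EuclideanSpace ℝ (Fin ν),
      ‖(∫ ω, Complex.exp (((2 * π * (inner ℝ v (L ω) : ℝ) : ℝ) : ℂ) * Complex.I) ∂ℙ)‖
          = 1 ↔ ∀ i, ∃ k : ℤ, v i = (k : ℝ)) :
    (∀ᵐ ω ∂ℙ, ∀ i : Fin ν,
      ∃ k : ℤ, (if (i : ℕ) = ν - 1 then (q : ℝ) else 1) * L ω i = (k : ℝ)) ∧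
    (∀ t : Fin ν → ℝ,
      (∀ᵐ ω ∂ℙ, ∃ k : ℤ,
        (∑ i, t i * ((if (i : ℕ) = ν - 1 then (q : ℝ) else 1) * L ω i)) = (k : ℝ)) ↔
      ∀ i, ∃ k : ℤ, t i = (k : ℝ)) := by
  obtain _ | n := ν
  · simp [eq_comm]
  have hq : q ≠ 0 := by omega
  have hlast : ∀ i : Fin (n + 1), (i : ℕ) = n + 1 - 1 ↔ i = Fin.last n := by
    simp [Fin.ext_iff]
  -- `l₀ = Pi.single (Fin.last n) (p / q)` and `D = diagonal (Pi.mulSingle (Fin.last n) q)`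
  simp only [hlast, ← Pi.single_apply, ← Pi.mulSingle_apply] at hlat ⊢
  have hDL : ∀ᵐ ω ∂ℙ, ∀ i, ∃ k : ℤ,
      (Pi.mulSingle (Fin.last n) (q : ℝ) : Fin (n + 1) → ℝ) i * L ω i = k := by
    filter_upwards [hlat] with ω hω i
    exact exists_mulSingle_mul_eq_intCast _ hq (hω i)
  refine ⟨hDL, fun t => ⟨?_, fun ht => ?_⟩⟩
  · exact exists_eq_intCast_of_ae_sum_mulSingle_mul_eq_intCast _ hq hcop hlat fun v => (hchar v).1
  · filter_upwards [hDL] with ω hω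
    exact exists_dotProduct_eq_intCast ht hω

/-- **Proposition 1.2, part 2)**: let `L ∈ ℝ^ν` be a random variable with
`P(L ∈ l₀ + ℤ^ν) = 1`, where `l₀ = (0,…,0,p/q)` for coprime integers `0 ≤ p < q`, and such
that for `v ∈ ℝ^ν`, `|E e^{2πi⟨v,L⟩}| = 1` iff `v ∈ ℤ^ν`.  Then, with `D = diag(1,…,1,q)`,
the random variable `DL` takes values in `ℤ^ν` (almost surely) and is aperiodic, i.e.
for `t ∈ ℝ^ν`: `⟨t, DL⟩ ∈ ℤ` almost surely iff `t ∈ ℤ^ν`. -/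
theorem DL_aperiodic {ν : ℕ} (hν : 0 < ν) {Ω : Type} [MeasureSpace Ω]
    [IsProbabilityMeasure (ℙ : Measure Ω)]
    (L : Ω → EuclideanSpace ℝ (Fin ν)) (hL : Measurable L)
    (p q : ℕ) (hpq : p < q) (hcop : Nat.Coprime p q)
    (hlat : ∀ᵐ ω ∂ℙ, ∀ i : Fin ν,
      ∃ k : ℤ, L ω i = (if (i : ℕ) = ν - 1 then (p : ℝ) / (q : ℝ) else 0) + (k : ℝ))
    (hchar : ∀ v : EuclideanSpace ℝ (Fin ν),
      ‖(∫ ω, Complex.exp (((2 * π * (inner ℝ v (L ω) : ℝ) : ℝ) : ℂ) * Complex.I) ∂ℙ)‖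
          = 1 ↔ ∀ i, ∃ k : ℤ, v i = (k : ℝ)) :
    (∀ᵐ ω ∂ℙ, ∀ i : Fin ν,
      ∃ k : ℤ, (if (i : ℕ) = ν - 1 then (q : ℝ) else 1) * L ω i = (k : ℝ)) ∧
    (∀ t : Fin ν → ℝ,
      (∀ᵐ ω ∂ℙ, ∃ k : ℤ,
        (∑ i, t i * ((if (i : ℕ) = ν - 1 then (q : ℝ) else 1) * L ω i)) = (k : ℝ)) ↔
      ∀ i, ∃ k : ℤ, t i = (k : ℝ)) :=
  DL_aperiodic_general L p q hpq hcop hlat hchar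
end
end

section
/- There is a constant c_d > 0 depending only on the dimension d such that for every random variable X in ℝ^d, every h ≥ 0 and every a > 0: Q_X(h) ≤ c_d (max(1/a, h))^d ∫_{‖t‖ ≤ a} |φ_X(t)| dt. -/
/-!
Let `ν` be Lebesgue measure on the cube `[-a/2, a/2]^d` and `ψ` its characteristic function.
`ψ` is a product of one-dimensional factors, each of real part at least `23a/24` on `|w| ≤ 1/a`
because `cos x ≥ 1 - x²/2`; hence `|ψ(y - z)| ≥ (23a/24)^d` on the sup-norm ball of radius `1/a`
around `z`. Expanding `|ψ|²` and applying Fubini,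
`∫ |ψ(y - z)|² dμ(y) = ∫∫ e^{-i⟨s - t, z⟩} φ(s - t) dν(s) dν(t)`, and since `s - t` ranges over
`[-a, a]^d` a translation shows this is at most `a^d ∫_{‖t‖ ≤ a} |φ|`. So every sup-norm ball of
radius `1/a` has mass at most `(24/23)^{2d} a^{-d} ∫_{‖t‖ ≤ a} |φ|`, and `x + h[0,1)^d` is covered
by `(⌊ha/2⌋ + 1)^d ≤ (3/2 · a · max(1/a, h))^d` such balls.
-/

open MeasureTheory ProbabilityTheory Filter Set Real

noncomputable section

/-- Euclidean space ℝ^d. -/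
abbrev E (d : ℕ) := EuclideanSpace ℝ (Fin d)

/-- The half-open cube `h·[0,1)^d`. -/
def cube (d : ℕ) (h : ℝ) : Set (E d) := {x | ∀ i, x i ∈ Ico (0:ℝ) h}

/-- The characteristic function `φ(t) = ∫ e^{i⟨t,x⟩} μ(dx)`. -/
def charFun' {d : ℕ} (μ : Measure (E d)) (t : E d) : ℂ :=
  ∫ x, Complex.exp (((inner ℝ t x : ℝ) : ℂ) * Complex.I) ∂μ

open Complex (I)
open scoped Complex RealInnerProductSpace

lemma le_re_charFun_restrict_Icc {r w : ℝ} (hr : 0 ≤ r) (hw : |w| * r ≤ 1 / 2) :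
    23 / 12 * r ≤ (charFun (volume.restrict (Icc (-r) r)) w).re := by
  have hint : IntegrableOn (fun x : ℝ => cexp (w * x * I)) (Icc (-r) r) :=
    Continuous.integrableOn_Icc (by fun_prop)
  have hcos : (charFun (volume.restrict (Icc (-r) r)) w).re = ∫ x in (-r)..r, Real.cos (w * x) := by
    rw [charFun_apply_real, ← RCLike.re_eq_complex_re, ← integral_re hint,
      intervalIntegral.integral_of_le (by linarith), integral_Icc_eq_integral_Ioc]
    push_cast [← Complex.ofReal_mul]
    simp only [RCLike.re_to_complex, Complex.exp_ofReal_mul_I_re]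
  have hpoly : ∫ x in (-r)..r, (1 - w ^ 2 / 2 * x ^ 2) = 2 * r - w ^ 2 * r ^ 3 / 3 := by
    rw [intervalIntegral.integral_sub intervalIntegrable_const
      ((intervalIntegral.intervalIntegrable_pow 2).const_mul _), intervalIntegral.integral_const,
      intervalIntegral.integral_const_mul, integral_pow, smul_eq_mul]
    ring
  have hw2 : w ^ 2 * r ^ 3 ≤ r / 4 := by
    have : (|w| * r) ^ 2 ≤ (1 / 2) ^ 2 := pow_le_pow_left₀ (by positivity) hw 2
    rw [mul_pow, sq_abs] at this
    nlinarith
  calc 23 / 12 * r ≤ ∫ x in (-r)..r, (1 - w ^ 2 / 2 * x ^ 2) := by rw [hpoly]; linarith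
    _ ≤ ∫ x in (-r)..r, Real.cos (w * x) := by
      refine intervalIntegral.integral_mono_on (by linarith) (Continuous.intervalIntegrable
        (by fun_prop) _ _) (Continuous.intervalIntegrable (by fun_prop) _ _) fun x _ => ?_
      have := Real.one_sub_sq_div_two_le_cos (x := w * x)
      linarith [show (w * x) ^ 2 / 2 = w ^ 2 / 2 * x ^ 2 by ring]
    _ = _ := hcos.symm

lemma integral_norm_charFun_sub_sq_le {V : Type*} [NormedAddCommGroup V] [InnerProductSpace ℝ V]
    [MeasurableSpace V] [BorelSpace V] [SecondCountableTopology V] (μ ν : Measure V)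
    [IsFiniteMeasure μ] [IsFiniteMeasure ν] (z : V) :
    ∫ y, ‖charFun ν (y - z)‖ ^ 2 ∂μ ≤ ∫ p, ‖charFun μ (p.1 - p.2)‖ ∂(ν.prod ν) := by
  let f : V → V × V → ℂ := fun y p => cexp (⟪p.1 - p.2, y - z⟫ * I)
  have hsq : ∀ y, (‖charFun ν (y - z)‖ ^ 2 : ℂ) = ∫ p, f y p ∂(ν.prod ν) := by
    intro y
    rw [← Complex.conj_mul', mul_comm, ← charFun_neg, charFun_apply, charFun_apply,
      ← integral_prod_mul]
    congr 1 with p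
    simp only [f, ← Complex.exp_add, inner_sub_left, inner_neg_right]
    push_cast
    ring_nf
  have hf : Integrable (Function.uncurry f) (μ.prod (ν.prod ν)) :=
    Integrable.of_bound (Continuous.aestronglyMeasurable (by fun_prop)) 1
      (ae_of_all _ fun q => (Complex.norm_exp_ofReal_mul_I _).le)
  have hswap : ∀ p : V × V,
      ∫ y, f y p ∂μ = cexp (↑(-⟪p.1 - p.2, z⟫) * I) * charFun μ (p.1 - p.2) := by
    intro p
    rw [charFun_apply, ← integral_const_mul]
    congr 1 with y
    simp only [f, ← Complex.exp_add, inner_sub_right, real_inner_comm y]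
    push_cast
    ring_nf
  calc ∫ y, ‖charFun ν (y - z)‖ ^ 2 ∂μ ≤ ‖((∫ y, ‖charFun ν (y - z)‖ ^ 2 ∂μ : ℝ) : ℂ)‖ := by
        rw [Complex.norm_real, Real.norm_eq_abs]
        exact le_abs_self _
    _ = ‖∫ p, ∫ y, f y p ∂μ ∂(ν.prod ν)‖ := by
        rw [← integral_integral_swap hf, ← integral_complex_ofReal]
        simp_rw [Complex.ofReal_pow, hsq]
    _ ≤ ∫ p, ‖charFun μ (p.1 - p.2)‖ ∂(ν.prod ν) := by
        refine (norm_integral_le_integral_norm _).trans_eq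
          (integral_congr_ae (ae_of_all _ fun p => ?_))
        simp only [hswap, norm_mul, Complex.norm_exp_ofReal_mul_I, one_mul]

lemma integral_prod_restrict_sub_le {G : Type*} [AddCommGroup G] [MeasurableSpace G]
    [MeasurableAdd G] [MeasurableNeg G] {m : Measure G} [m.IsAddLeftInvariant] [m.IsNegInvariant]
    {S T : Set G} (hS : MeasurableSet S) [IsFiniteMeasure (m.restrict S)] (hT : MeasurableSet T)
    (hST : ∀ s ∈ S, ∀ t ∈ S, s - t ∈ T) {g : G → ℝ} (hg0 : 0 ≤ g) (hg : IntegrableOn g T m) :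
    ∫ p, g (p.1 - p.2) ∂((m.restrict S).prod (m.restrict S)) ≤ m.real S * ∫ u in T, g u ∂m := by
  by_cases hint : Integrable (fun p : G × G => g (p.1 - p.2)) ((m.restrict S).prod (m.restrict S))
  swap
  · rw [integral_undef hint]
    exact mul_nonneg measureReal_nonneg (setIntegral_nonneg hT fun u _ => hg0 u)
  have hinner : ∀ s ∈ S, ∫ t in S, g (s - t) ∂m ≤ ∫ u in T, g u ∂m := by
    intro s hs
    let k : G → ℝ := fun u => S.indicator (fun t => g (s - t)) (s - u)
    have hk : ∀ u, k u ≤ T.indicator g u := by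
      intro u
      by_cases hu : s - u ∈ S
      · have := hST s hs _ hu
        rw [sub_sub_cancel] at this
        simp only [k, indicator_of_mem hu, sub_sub_cancel, indicator_of_mem this, le_refl]
      · simp only [k, indicator_of_notMem hu]
        exact indicator_nonneg (fun u _ => hg0 u) u
    rw [← integral_indicator hS, ← integral_indicator hT]
    calc ∫ t, S.indicator (fun t => g (s - t)) t ∂m = ∫ t, k (s - t) ∂m := by
          simp only [k, sub_sub_cancel]
      _ = ∫ u, k u ∂m := integral_sub_left_eq_self k m s
      _ ≤ ∫ u, T.indicator g u ∂m :=
          integral_mono_of_nonneg (ae_of_all _ fun u => indicator_nonneg (fun _ _ => hg0 _) _)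
            ((integrable_indicator_iff hT).2 hg) (ae_of_all _ hk)
  rw [integral_prod _ hint]
  calc ∫ s in S, ∫ t in S, g (s - t) ∂m ∂m ≤ ∫ _ in S, ∫ u in T, g u ∂m ∂m :=
        setIntegral_mono_on hint.integral_prod_left (integrable_const _) hS hinner
    _ = m.real S * ∫ u in T, g u ∂m := by rw [setIntegral_const, smul_eq_mul]

variable {ι : Type*}

def supBall (z : EuclideanSpace ℝ ι) (r : ℝ) : Set (EuclideanSpace ℝ ι) :=
  {y | ∀ i, |y i - z i| ≤ r}

lemma sub_mem_supBall_zero {s t : EuclideanSpace ℝ ι} {r r' : ℝ} (hs : s ∈ supBall 0 r)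
    (ht : t ∈ supBall 0 r') : s - t ∈ supBall 0 (r + r') := fun i => by
  simpa using (abs_sub (s i) (t i)).trans (add_le_add (by simpa using hs i) (by simpa using ht i))

variable [Fintype ι]

lemma measurableSet_supBall (z : EuclideanSpace ℝ ι) (r : ℝ) : MeasurableSet (supBall z r) := by
  simp only [supBall, ofPred_forall]
  exact MeasurableSet.iInter fun i => measurableSet_le (by fun_prop) measurable_const

lemma restrict_supBall_zero_eq_map_pi (r : ℝ) :
    volume.restrict (supBall (0 : EuclideanSpace ℝ ι) r) =
      (Measure.pi fun _ : ι => volume.restrict (Icc (-r) r)).map (WithLp.toLp 2) := by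
  rw [← Measure.restrict_pi_pi, ← volume_pi, ← (PiLp.volume_preserving_toLp ι).map_eq,
    ← MeasurableEquiv.coe_toLp, MeasurableEquiv.restrict_map]
  congr 2
  ext t
  simp [supBall, abs_le, -Set.pi_univ_Icc, Set.mem_pi]

instance (r : ℝ) : IsFiniteMeasure (volume.restrict (supBall (0 : EuclideanSpace ℝ ι) r)) := by
  rw [restrict_supBall_zero_eq_map_pi]
  infer_instance

lemma volume_real_supBall_zero {r : ℝ} (hr : 0 ≤ r) :
    volume.real (supBall (0 : EuclideanSpace ℝ ι) r) = (2 * r) ^ Fintype.card ι := by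
  rw [← measureReal_restrict_apply_univ, restrict_supBall_zero_eq_map_pi, map_measureReal_apply
    (by fun_prop) MeasurableSet.univ, preimage_univ, ← Set.pi_univ, measureReal_def,
    Measure.pi_pi]
  simp [Real.volume_Icc, ENNReal.toReal_ofReal (by linarith : 0 ≤ r + r), two_mul]

lemma charFun_restrict_supBall_zero (r : ℝ) (y : EuclideanSpace ℝ ι) :
    charFun (volume.restrict (supBall 0 r)) y =
      ∏ i, charFun (volume.restrict (Icc (-r) r)) (y i) := by
  rw [restrict_supBall_zero_eq_map_pi, charFun_pi]

lemma le_norm_charFun_restrict_supBall_zero {a : ℝ} (ha : 0 < a) {y : EuclideanSpace ℝ ι}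
    (hy : y ∈ supBall 0 a⁻¹) :
    (23 / 24 * a) ^ Fintype.card ι ≤ ‖charFun (volume.restrict (supBall 0 (a / 2))) y‖ := by
  have hyi (i : ι) : |y i| * (a / 2) ≤ 1 / 2 := by
    calc |y i| * (a / 2) ≤ a⁻¹ * (a / 2) := by gcongr; simpa using hy i
      _ = 1 / 2 := by field_simp
  rw [charFun_restrict_supBall_zero, norm_prod, ← Finset.card_univ, ← Finset.prod_const,
    show 23 / 24 * a = 23 / 12 * (a / 2) by ring]
  exact Finset.prod_le_prod (fun _ _ => by positivity) fun i _ =>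
    (le_re_charFun_restrict_Icc (by positivity) (hyi i)).trans (Complex.re_le_norm _)

lemma integral_norm_charFun_sub_le_mul_setIntegral (μ : Measure (EuclideanSpace ℝ ι))
    [IsFiniteMeasure μ] {a : ℝ} (ha : 0 ≤ a) :
    ∫ p, ‖charFun μ (p.1 - p.2)‖ ∂((volume.restrict (supBall 0 (a / 2))).prod
        (volume.restrict (supBall 0 (a / 2)))) ≤
      a ^ Fintype.card ι * ∫ t in supBall 0 a, ‖charFun μ t‖ := by
  have hsub : ∀ s ∈ supBall (0 : EuclideanSpace ℝ ι) (a / 2), ∀ t ∈ supBall 0 (a / 2),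
      s - t ∈ supBall 0 a :=
    fun s hs t ht => add_halves a ▸ sub_mem_supBall_zero hs ht
  have hint : IntegrableOn (fun t => ‖charFun μ t‖) (supBall 0 a) :=
    Integrable.of_bound (Continuous.aestronglyMeasurable (by fun_prop)) (μ.real univ)
      (ae_of_all _ fun t => (norm_norm _).trans_le (norm_charFun_le t))
  have := integral_prod_restrict_sub_le (measurableSet_supBall 0 (a / 2))
    (measurableSet_supBall 0 a) hsub (fun _ => norm_nonneg _) hint
  rwa [volume_real_supBall_zero (by positivity), mul_div_cancel₀ _ two_ne_zero] at this

lemma measureReal_supBall_le_integral_norm_charFun (μ : Measure (EuclideanSpace ℝ ι))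
    [IsFiniteMeasure μ] {a : ℝ} (ha : 0 < a) (z : EuclideanSpace ℝ ι) :
    μ.real (supBall z a⁻¹) ≤ (24 / 23) ^ (2 * Fintype.card ι) * a⁻¹ ^ Fintype.card ι *
      ∫ t in supBall 0 a, ‖charFun μ t‖ := by
  set n := Fintype.card ι
  set ν := volume.restrict (supBall (0 : EuclideanSpace ℝ ι) (a / 2))
  have hF : Integrable (fun y => ‖charFun ν (y - z)‖ ^ 2) μ :=
    Integrable.of_bound (Continuous.aestronglyMeasurable (by fun_prop)) (ν.real univ ^ 2)
      (ae_of_all _ fun y => by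
        rw [norm_pow, norm_norm]
        exact pow_le_pow_left₀ (norm_nonneg _) (norm_charFun_le _) 2)
  have hlower : ((23 / 24 * a) ^ n) ^ 2 * μ.real (supBall z a⁻¹) ≤
      ∫ y, ‖charFun ν (y - z)‖ ^ 2 ∂μ := by
    rw [mul_comm, ← smul_eq_mul]
    refine (setIntegral_ge_of_const_le (measurableSet_supBall _ _) (measure_ne_top _ _)
      (fun y hy => ?_) hF.integrableOn).trans
      (setIntegral_le_integral hF (ae_of_all _ fun y => by positivity))
    exact pow_le_pow_left₀ (by positivity)
      (le_norm_charFun_restrict_supBall_zero ha (by simpa [supBall] using hy)) 2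
  have key := hlower.trans ((integral_norm_charFun_sub_sq_le μ ν z).trans
    (integral_norm_charFun_sub_le_mul_setIntegral μ ha.le))
  refine le_of_mul_le_mul_left (key.trans_eq ?_) (by positivity : 0 < ((23 / 24 * a) ^ n) ^ 2)
  have hbase : (23 / 24 * a) ^ 2 * (24 / 23) ^ 2 * a⁻¹ = a := by field_simp
  rw [← pow_mul, pow_mul', pow_mul, ← mul_assoc, ← mul_assoc, ← mul_pow, ← mul_pow, hbase]

lemma abs_sub_two_mul_floor_add_one_mul_inv_le {a u : ℝ} (ha : 0 < a) (hu : 0 ≤ u) :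
    |u - (2 * ⌊u * a / 2⌋₊ + 1) * a⁻¹| ≤ a⁻¹ := by
  set k := ⌊u * a / 2⌋₊
  have hk : (k : ℝ) ≤ u * a / 2 := Nat.floor_le (by positivity)
  have hk' : u * a / 2 < k + 1 := Nat.lt_floor_add_one _
  have hdist : |u * a - (2 * k + 1)| ≤ 1 := abs_le.2 ⟨by linarith, by linarith⟩
  calc |u - (2 * k + 1) * a⁻¹| = |u * a - (2 * k + 1)| * a⁻¹ := by
        rw [← abs_of_pos (inv_pos.2 ha), ← abs_mul, abs_of_pos (inv_pos.2 ha)]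
        congr 1
        field_simp
    _ ≤ a⁻¹ := mul_le_of_le_one_left (by positivity) hdist

lemma setOf_sub_mem_cube_subset_iUnion_supBall {d : ℕ} {a : ℝ} (ha : 0 < a) (h : ℝ) (x : E d) :
    {y | y - x ∈ cube d h} ⊆
      ⋃ k : Fin d → Fin (⌊h * a / 2⌋₊ + 1),
        supBall (x + WithLp.toLp 2 fun i => (2 * (k i : ℝ) + 1) * a⁻¹) a⁻¹ := by
  intro y hy
  have hyx : ∀ i, 0 ≤ y i - x i ∧ y i - x i < h := by simpa [cube] using hy
  refine mem_iUnion.2 ⟨fun i => ⟨⌊(y i - x i) * a / 2⌋₊, Nat.lt_succ_of_le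
    (Nat.floor_le_floor (by gcongr; exact (hyx i).2.le))⟩, fun i => ?_⟩
  simpa [sub_add_eq_sub_sub] using abs_sub_two_mul_floor_add_one_mul_inv_le ha (hyx i).1

lemma measureReal_setOf_sub_mem_cube_le {d : ℕ} (μ : Measure (E d)) [IsFiniteMeasure μ]
    {a B : ℝ} (ha : 0 < a) (h : ℝ) (x : E d) (hB : ∀ z, μ.real (supBall z a⁻¹) ≤ B) :
    μ.real {y | y - x ∈ cube d h} ≤ (⌊h * a / 2⌋₊ + 1) ^ d * B := by
  calc μ.real {y | y - x ∈ cube d h}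
      ≤ μ.real (⋃ k : Fin d → Fin (⌊h * a / 2⌋₊ + 1),
          supBall (x + WithLp.toLp 2 fun i => (2 * (k i : ℝ) + 1) * a⁻¹) a⁻¹) :=
        measureReal_mono (setOf_sub_mem_cube_subset_iUnion_supBall ha h x)
    _ ≤ ∑ k : Fin d → Fin (⌊h * a / 2⌋₊ + 1), B :=
        (measureReal_iUnion_fintype_le _).trans (Finset.sum_le_sum fun k _ => hB _)
    _ = (⌊h * a / 2⌋₊ + 1) ^ d * B := by simp

lemma floor_add_one_mul_inv_le {a h : ℝ} (ha : 0 < a) (hh : 0 ≤ h) :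
    (⌊h * a / 2⌋₊ + 1 : ℝ) * a⁻¹ ≤ 3 / 2 * max a⁻¹ h := by
  have hfloor : (⌊h * a / 2⌋₊ : ℝ) ≤ h * a / 2 := Nat.floor_le (by positivity)
  calc (⌊h * a / 2⌋₊ + 1 : ℝ) * a⁻¹ ≤ (h * a / 2 + 1) * a⁻¹ := by gcongr
    _ = h / 2 + a⁻¹ := by field_simp
    _ ≤ 3 / 2 * max a⁻¹ h := by linarith [le_max_left a⁻¹ h, le_max_right a⁻¹ h]

lemma charFun'_eq_charFun {d : ℕ} (μ : Measure (E d)) : charFun' μ = charFun μ :=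
  funext fun t => by simp only [charFun', charFun_apply, real_inner_comm]

lemma setOf_forall_abs_le_eq_supBall {d : ℕ} (a : ℝ) :
    {t : E d | ∀ i, |t i| ≤ a} = supBall 0 a := by
  ext t
  simp [supBall]

/-- **Lemma 3.1** (Lévy concentration function bound): there is a constant `c_d > 0` depending
only on the dimension `d` such that for every random variable `X` in ℝ^d (equivalently, every
probability law `μ` on ℝ^d), every `h ≥ 0` and every `a > 0`:
`Q_X(h) = sup_x P(X ∈ x + h[0,1)^d) ≤ c_d (max (1/a) h)^d ∫_{‖t‖_∞ ≤ a} |φ_X(t)| dt`. -/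
theorem levy_concentration_bound (d : ℕ) :
    ∃ c > (0:ℝ), ∀ μ : Measure (E d), IsProbabilityMeasure μ →
      ∀ h : ℝ, 0 ≤ h → ∀ a : ℝ, 0 < a → ∀ x : E d,
        (μ {y | y - x ∈ cube d h}).toReal ≤
          c * (max a⁻¹ h) ^ d *
            ∫ t in {t : E d | ∀ i, |t i| ≤ a}, ‖charFun' μ t‖ := by
  refine ⟨(3 / 2) ^ d * (24 / 23) ^ (2 * d), by positivity, fun μ _ h hh a ha x => ?_⟩
  rw [charFun'_eq_charFun, setOf_forall_abs_le_eq_supBall]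
  set C := ∫ t in supBall 0 a, ‖charFun μ t‖
  have hball (z : E d) : μ.real (supBall z a⁻¹) ≤ (24 / 23) ^ (2 * d) * a⁻¹ ^ d * C := by
    simpa using measureReal_supBall_le_integral_norm_charFun μ ha z
  calc μ.real {y | y - x ∈ cube d h}
      ≤ (⌊h * a / 2⌋₊ + 1) ^ d * ((24 / 23) ^ (2 * d) * a⁻¹ ^ d * C) :=
        measureReal_setOf_sub_mem_cube_le μ ha h x hball
    _ = ((⌊h * a / 2⌋₊ + 1) * a⁻¹) ^ d * ((24 / 23) ^ (2 * d) * C) := by rw [mul_pow]; ring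
    _ ≤ (3 / 2 * max a⁻¹ h) ^ d * ((24 / 23) ^ (2 * d) * C) := by
        gcongr ?_ ^ d * _
        exact floor_add_one_mul_inv_le ha hh
    _ = (3 / 2) ^ d * (24 / 23) ^ (2 * d) * max a⁻¹ h ^ d * C := by ring
end
end
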